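/- arXiv:1411.4627 — 5 statements merged into one kernel-verified Lean document; each statement's English description precedes it below -/
import Mathlib

section
/- The function ρ_{1,ω₀}(x) = sgn(x)·(ω₀ x - sin(ω₀ x))/(2ω₀³) satisfies L_{1,ω₀} ρ_{1,ω₀} = δ in the sense of distributions, i.e., for every smooth compactly supported test function φ, ∫_ℝ ρ_{1,ω₀}(x)·(φ''''(x) + ω₀² φ''(x)) dx = φ(0). -/
open Real MeasureTheory Filter Set

theorem rho1_green_function (ω₀ : ℝ) (hω₀ : 0 < ω₀)
    (ρ : ℝ → ℝ)
    (hρ : ∀ x, ρ x = Real.sign x * (ω₀ * x - Real.sin (ω₀ * x)) / (2 * ω₀ ^ 3))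
    (φ : ℝ → ℝ) (hφ : ContDiff ℝ (⊤ : ℕ∞) φ) (hφc : HasCompactSupport φ) :
    ∫ x : ℝ, ρ x * (iteratedDeriv 4 φ x + ω₀ ^ 2 * iteratedDeriv 2 φ x) = φ 0 := by
  have hω : ω₀ ≠ 0 := ne_of_gt hω₀
  -- the smooth branch g and its derivatives
  set g : ℝ → ℝ := fun x => (ω₀ * x - Real.sin (ω₀ * x)) / (2 * ω₀ ^ 3) with hg
  set g1 : ℝ → ℝ := fun x => (1 - Real.cos (ω₀ * x)) / (2 * ω₀ ^ 2) with hg1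
  set g2 : ℝ → ℝ := fun x => Real.sin (ω₀ * x) / (2 * ω₀) with hg2
  set g3 : ℝ → ℝ := fun x => Real.cos (ω₀ * x) / 2 with hg3
  have hlin : ∀ x : ℝ, HasDerivAt (fun y => ω₀ * y) ω₀ x := fun x => by
    simpa using (hasDerivAt_id x).const_mul ω₀
  have hgd : ∀ x, HasDerivAt g (g1 x) x := by
    intro x
    have h := (((hlin x).sub (hlin x).sin).div_const (2 * ω₀ ^ 3))
    refine h.congr_deriv ?_
    simp only [hg1]
    field_simp
  have hg1d : ∀ x, HasDerivAt g1 (g2 x) x := by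
    intro x
    have h := (((hasDerivAt_const x (1:ℝ)).sub (hlin x).cos).div_const (2 * ω₀ ^ 2))
    refine h.congr_deriv ?_
    simp only [hg2]
    field_simp
    ring
  have hg2d : ∀ x, HasDerivAt g2 (g3 x) x := by
    intro x
    have h := ((hlin x).sin).div_const (2 * ω₀)
    refine h.congr_deriv ?_
    simp only [hg3]
    field_simp
  have hg3d : ∀ x, HasDerivAt g3 (-(ω₀ ^ 2) * g2 x) x := by
    intro x
    have h := ((hlin x).cos).div_const 2
    refine h.congr_deriv ?_
    simp only [hg2]
    field_simp
  -- derivatives of φ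
  have hp : ∀ n : ℕ, ∀ x : ℝ, HasDerivAt (iteratedDeriv n φ) (iteratedDeriv (n + 1) φ x) x := by
    intro n x
    have h : Differentiable ℝ (iteratedDeriv n φ) :=
      hφ.differentiable_iteratedDeriv n (by exact_mod_cast lt_top_iff_ne_top.mpr (by simp))
    rw [iteratedDeriv_succ]
    exact (h x).hasDerivAt
  -- the antiderivative
  set F : ℝ → ℝ := fun x =>
    g x * iteratedDeriv 3 φ x - g1 x * iteratedDeriv 2 φ x + g2 x * iteratedDeriv 1 φ x
      - g3 x * iteratedDeriv 0 φ x
      + ω₀ ^ 2 * (g x * iteratedDeriv 1 φ x - g1 x * iteratedDeriv 0 φ x) with hFdef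
  have hF : ∀ x, HasDerivAt F
      (g x * (iteratedDeriv 4 φ x + ω₀ ^ 2 * iteratedDeriv 2 φ x)) x := by
    intro x
    have h := (((((hgd x).mul (hp 3 x)).sub ((hg1d x).mul (hp 2 x))).add
        ((hg2d x).mul (hp 1 x))).sub ((hg3d x).mul (hp 0 x))).add
        ((((hgd x).mul (hp 1 x)).sub ((hg1d x).mul (hp 0 x))).const_mul (ω₀ ^ 2))
    refine h.congr_deriv ?_
    ring
  -- ρ in terms of g
  have hρpos : ∀ x : ℝ, 0 < x → ρ x = g x := by
    intro x hx
    rw [hρ x, Real.sign_of_pos hx, one_mul]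
  have hρneg : ∀ x : ℝ, x < 0 → ρ x = -g x := by
    intro x hx
    rw [hρ x, Real.sign_of_neg hx, hg]
    ring
  -- ρ is continuous (it equals g ∘ |·|)
  have hρabs : ρ = fun x => (ω₀ * |x| - Real.sin (ω₀ * |x|)) / (2 * ω₀ ^ 3) := by
    funext x
    rcases lt_trichotomy x 0 with h | h | h
    · rw [hρneg x h, abs_of_neg h, mul_neg, Real.sin_neg, hg]
      ring
    · subst h; simp [hρ 0]
    · rw [hρpos x h, abs_of_pos h, hg]
  have hρc : Continuous ρ := by
    rw [hρabs]; fun_prop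
  -- vanishing of iterated derivatives outside the support
  have hsupp : ∀ n : ℕ, ∀ x, x ∉ tsupport φ → iteratedDeriv n φ x = 0 := by
    intro n
    induction n with
    | zero => intro x hx; simpa using image_eq_zero_of_notMem_tsupport hx
    | succ n ih =>
      intro x hx
      have hev : iteratedDeriv n φ =ᶠ[nhds x] (fun _ => (0:ℝ)) :=
        eventually_of_mem ((isClosed_tsupport φ).isOpen_compl.mem_nhds hx) ih
      rw [iteratedDeriv_succ, hev.deriv_eq, deriv_const]
  -- bound for the support
  obtain ⟨R, hR⟩ : ∃ R : ℝ, tsupport φ ⊆ Icc (-R) R := by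
    obtain ⟨R, hR⟩ := hφc.isCompact.isBounded.subset_closedBall 0
    exact ⟨R, by simpa [Real.closedBall_eq_Icc] using hR⟩
  have hFtop : Tendsto F atTop (nhds 0) := by
    apply tendsto_const_nhds.congr'
    filter_upwards [eventually_gt_atTop R] with x hx
    have hx' : x ∉ tsupport φ := fun h => absurd (hR h).2 (not_le.2 hx)
    simp only [hFdef, hsupp 0 x hx', hsupp 1 x hx', hsupp 2 x hx', hsupp 3 x hx']
    ring
  have hFbot : Tendsto (fun x => -F x) atBot (nhds 0) := by
    apply tendsto_const_nhds.congr'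
    filter_upwards [eventually_lt_atBot (-R)] with x hx
    have hx' : x ∉ tsupport φ := fun h => absurd (hR h).1 (not_le.2 hx)
    simp only [hFdef, hsupp 0 x hx', hsupp 1 x hx', hsupp 2 x hx', hsupp 3 x hx']
    ring
  -- integrability
  have hLc : Continuous fun x => ρ x * (iteratedDeriv 4 φ x + ω₀ ^ 2 * iteratedDeriv 2 φ x) := by
    exact hρc.mul ((hφ.continuous_iteratedDeriv 4 (WithTop.coe_le_coe.mpr le_top)).add
      (continuous_const.mul (hφ.continuous_iteratedDeriv 2 (WithTop.coe_le_coe.mpr le_top))))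
  have hcs : HasCompactSupport fun x =>
      ρ x * (iteratedDeriv 4 φ x + ω₀ ^ 2 * iteratedDeriv 2 φ x) := by
    apply HasCompactSupport.intro hφc
    intro x hx
    simp [hsupp 4 x hx, hsupp 2 x hx]
  have hint : Integrable fun x => ρ x * (iteratedDeriv 4 φ x + ω₀ ^ 2 * iteratedDeriv 2 φ x) :=
    hLc.integrable_of_hasCompactSupport hcs
  -- FTC on each half line
  have hIoi : ∫ x in Ioi (0:ℝ),
      ρ x * (iteratedDeriv 4 φ x + ω₀ ^ 2 * iteratedDeriv 2 φ x) = 0 - F 0 := by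
    apply integral_Ioi_of_hasDerivAt_of_tendsto (hF 0).continuousAt.continuousWithinAt
      _ hint.integrableOn hFtop
    intro x hx
    rw [hρpos x hx]
    exact hF x
  have hIic : ∫ x in Iic (0:ℝ),
      ρ x * (iteratedDeriv 4 φ x + ω₀ ^ 2 * iteratedDeriv 2 φ x) = -F 0 - 0 := by
    apply integral_Iic_of_hasDerivAt_of_tendsto
      ((hF 0).continuousAt.neg.continuousWithinAt) _ hint.integrableOn hFbot
    intro x hx
    rw [hρneg x hx]
    have := (hF x).neg
    convert this using 1
    ring
  have hF0 : F 0 = -(φ 0 / 2) := by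
    simp [hFdef, hg, hg1, hg2, hg3, iteratedDeriv_zero]
    ring
  rw [← intervalIntegral.integral_Iic_add_Ioi hint.integrableOn hint.integrableOn, hIoi, hIic, hF0]
  ring
end

section
/- As ω₀ → 0⁺, g_{1,ω₀}(x) converges pointwise for each x ∈ [0,1] to the Hermite cubic 2x³ - 3x² + 1 = (2x+1)(x-1)². -/
/-!
With `a = ω₀ / 2` and `b = ω₀ (1/2 - x)`, the numerator `g_{1,ω₀}(x) · s(ω₀)` equals
`sin a + sin b - (a + b) cos a`, and `s(ω₀)` is the same expression with `b = a`.
Third-order Taylor expansion of `sin` and `cos` shows that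
`sin (a t) + sin (b t) - (a + b) t cos (a t) = (a³/3 + a²b/2 - b³/6) t³ + O(t⁴)`,
so both numerator and denominator are cubic to leading order and their quotient tends to
the ratio of the leading coefficients, which is the Hermite cubic.
-/

open Real Filter Asymptotics Topology

theorem tendsto_div_pow_of_isBigO {𝕜 : Type*} [NormedField 𝕜] {f : 𝕜 → 𝕜} {c : 𝕜} {n : ℕ}
    (h : (fun t => f t - c * t ^ n) =O[𝓝 0] (· ^ (n + 1))) :
    Tendsto (fun t => f t / t ^ n) (𝓝[≠] 0) (𝓝 c) := by
  have hrem : Tendsto (fun t => (f t - c * t ^ n) / t ^ n) (𝓝[≠] 0) (𝓝 0) :=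
    ((h.trans_isLittleO (isLittleO_pow_pow n.lt_succ_self)).tendsto_div_nhds_zero).mono_left
      nhdsWithin_le_nhds
  refine (add_zero c ▸ hrem.const_add c).congr' ?_
  filter_upwards [self_mem_nhdsWithin] with t (ht : t ≠ 0)
  field_simp
  ring

theorem Asymptotics.IsBigO.comp_const_mul_of_pow {𝕜 E : Type*} [NormedField 𝕜] [Norm E]
    {f : 𝕜 → E} {n : ℕ} (h : f =O[𝓝 0] (· ^ n)) (a : 𝕜) : (fun t => f (a * t)) =O[𝓝 0] (· ^ n) := by
  have ha : Tendsto (a * ·) (𝓝 0) (𝓝 0) := (continuous_const_mul a).tendsto' 0 0 (mul_zero a)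
  refine (h.comp_tendsto ha).trans ?_
  simp only [Function.comp_def, mul_pow]
  exact (isBigO_refl _ _).const_mul_left _

theorem isBigO_sin_sub_taylor : (fun u => sin u - (u - u ^ 3 / 6)) =O[𝓝 0] (· ^ 5) := by
  refine .of_bound (1 / 100) ?_
  filter_upwards [Metric.closedBall_mem_nhds (0 : ℝ) one_pos] with u hu
  rw [Metric.mem_closedBall, dist_zero_right] at hu
  simpa [div_eq_inv_mul] using sin_bound hu

theorem isBigO_cos_sub_taylor : (fun u => cos u - (1 - u ^ 2 / 2)) =O[𝓝 0] (· ^ 4) := by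
  refine .of_bound (5 / 96) ?_
  filter_upwards [Metric.closedBall_mem_nhds (0 : ℝ) one_pos] with u hu
  rw [Metric.mem_closedBall, dist_zero_right] at hu
  simpa [mul_comm] using cos_bound hu

theorem isBigO_sin_add_sin_sub_mul_cos (a b : ℝ) :
    (fun t => sin (a * t) + sin (b * t) - (a + b) * t * cos (a * t)
      - (a ^ 3 / 3 + a ^ 2 * b / 2 - b ^ 3 / 6) * t ^ 3) =O[𝓝 0] (· ^ 4) := by
  have hsin (c : ℝ) : (fun t => sin (c * t) - (c * t - (c * t) ^ 3 / 6)) =O[𝓝 0] (· ^ 4) :=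
    (isBigO_sin_sub_taylor.comp_const_mul_of_pow c).trans
      (isLittleO_pow_pow (by norm_num)).isBigO
  have hcos : (fun t => t * (cos (a * t) - (1 - (a * t) ^ 2 / 2))) =O[𝓝 0] (· ^ 4) := by
    have h := (isBigO_refl (fun t : ℝ => t) (𝓝 0)).mul
      ((isBigO_cos_sub_taylor.comp_const_mul_of_pow a).trans
        (isLittleO_pow_pow (by norm_num : 3 < 4)).isBigO)
    simpa only [← pow_succ'] using h
  refine (((hsin a).add (hsin b)).sub (hcos.const_mul_left (a + b))).congr_left fun t => ?_
  ring

theorem g1_limit_cubic_hermite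
    (g : ℝ → ℝ → ℝ)
    (hg : ∀ ω₀ x, g ω₀ x =
      1 - Real.sin (ω₀ / 2) / (2 * Real.sin (ω₀ / 2) - ω₀ * Real.cos (ω₀ / 2))
        + (ω₀ * Real.cos (ω₀ / 2) / (2 * Real.sin (ω₀ / 2) - ω₀ * Real.cos (ω₀ / 2))) * x
        + Real.sin (ω₀ / 2 - ω₀ * x) / (2 * Real.sin (ω₀ / 2) - ω₀ * Real.cos (ω₀ / 2))) :
    ∀ x ∈ Set.Icc (0 : ℝ) 1,
      Tendsto (fun ω₀ => g ω₀ x) (nhdsWithin 0 (Set.Ioi 0))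
        (nhds (2 * x ^ 3 - 3 * x ^ 2 + 1)) := by
  intro x _
  have hnum := tendsto_div_pow_of_isBigO (isBigO_sin_add_sin_sub_mul_cos (1 / 2) (1 / 2 - x))
  have hden := tendsto_div_pow_of_isBigO (isBigO_sin_add_sin_sub_mul_cos (1 / 2) (1 / 2))
  have hcoeff : ((1 / 2) ^ 3 / 3 + (1 / 2) ^ 2 * (1 / 2 - x) / 2 - (1 / 2 - x) ^ 3 / 6)
      / ((1 / 2) ^ 3 / 3 + (1 / 2) ^ 2 * (1 / 2) / 2 - (1 / 2) ^ 3 / 6)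
      = 2 * x ^ 3 - 3 * x ^ 2 + 1 := by ring
  have hquot := (hnum.div hden (by norm_num)).mono_left (nhdsGT_le_nhdsNE 0)
  rw [hcoeff] at hquot
  refine hquot.congr' ?_
  filter_upwards [self_mem_nhdsWithin, (hden.eventually_ne (b₂ := 0) (by norm_num)).filter_mono
    (nhdsGT_le_nhdsNE 0)] with t (ht : 0 < t) hden_ne
  have e₁ : 1 / 2 * t = t / 2 := by ring
  have e₂ : (1 / 2 - x) * t = t / 2 - t * x := by ring
  simp only [Pi.div_apply, e₁, e₂] at hden_ne ⊢
  have hS : 2 * sin (t / 2) - t * cos (t / 2) ≠ 0 := fun h => hden_ne (by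
    rw [show sin (t / 2) + sin (t / 2) - (1 / 2 + 1 / 2) * t * cos (t / 2)
      = 2 * sin (t / 2) - t * cos (t / 2) by ring, h, zero_div])
  rw [hg]
  field_simp [ht.ne']
  ring
end

section
/- For every x ∈ ℝ, φ_{1,ω₀}(x) + φ_{1,ω₀}(x−1) = 1 for x ∈ [0,1]; more generally, ∑_{n∈ℤ} φ_{1,ω₀}(x−n) = 1 (partition of unity), where at most two terms are nonzero since φ_{1,ω₀} is supported in [−1,1]. -/
/-!
Write `f` for the profile of `g` on `[0, 1]`. The sine term of `f` is odd about `x = 1/2`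
and the linear terms add up to a constant, so `f x + f (1 - x) = 2 - s / s = 1`; this needs
`s ≠ 0`, which holds because `s = 2 (sin t - t cos t) > 0` for `t = ω₀ / 2 ∈ (0, π/2)`
(as `tan t > t`). In particular `f 1 = 0`, since `f 0 = 1`. As `φ₁ = g ∘ |·|`, on `[0, 1]` the
sum `φ₁ x + φ₁ (x - 1)` is `f x + f (1 - x) = 1`, and `φ₁` vanishes outside `(-1, 1)`, so the
series over `ℤ` reduces to the two terms with `n = ⌊x⌋` and `n = ⌊x⌋ + 1`.
-/

open Real Set

theorem Real.mul_cos_lt_sin {x : ℝ} (h0 : 0 < x) (h1 : x < π / 2) : x * cos x < sin x := by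
  have hcos : 0 < cos x := cos_pos_of_mem_Ioo ⟨by linarith [pi_pos], h1⟩
  calc x * cos x < tan x * cos x := mul_lt_mul_of_pos_right (lt_tan h0 h1) hcos
    _ = sin x := tan_mul_cos hcos.ne'

theorem two_mul_sin_half_sub_mul_cos_half_pos {ω : ℝ} (hω : ω ∈ Ioo 0 π) :
    0 < 2 * sin (ω / 2) - ω * cos (ω / 2) := by
  have := Real.mul_cos_lt_sin (x := ω / 2) (by linarith [hω.1]) (by linarith [hω.2])
  linarith

noncomputable def sinProfile (ω s y : ℝ) : ℝ :=
  1 - sin (ω / 2) / s + (ω * cos (ω / 2) / s) * y + sin (ω / 2 - ω * y) / s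

section sinProfile

variable {ω s : ℝ}

theorem sinProfile_zero : sinProfile ω s 0 = 1 := by
  simp [sinProfile]

theorem sinProfile_add_sinProfile_one_sub (hs : s = 2 * sin (ω / 2) - ω * cos (ω / 2))
    (hs0 : s ≠ 0) (x : ℝ) : sinProfile ω s x + sinProfile ω s (1 - x) = 1 := by
  have hodd : sin (ω / 2 - ω * (1 - x)) = -sin (ω / 2 - ω * x) := by
    rw [← sin_neg]; ring_nf
  rw [sinProfile, sinProfile, hodd]
  field_simp
  rw [hs]
  ring

theorem sinProfile_one (hs : s = 2 * sin (ω / 2) - ω * cos (ω / 2)) (hs0 : s ≠ 0) :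
    sinProfile ω s 1 = 0 := by
  simpa [sinProfile_zero] using sinProfile_add_sinProfile_one_sub hs hs0 0

end sinProfile

section EvenExtension

variable {M : Type*} [AddCommMonoid M]

theorem eq_abs_of_eq_ite {α : Type*} {g φ : ℝ → α}
    (h : ∀ x, φ x = if 0 ≤ x then g x else g (-x)) (x : ℝ) : φ x = g |x| := by
  rw [h]
  split_ifs with hx
  · rw [abs_of_nonneg hx]
  · rw [abs_of_neg (not_le.mp hx)]

theorem indicator_Icc_abs_eq_zero {f : ℝ → M} (hf : f 1 = 0) {y : ℝ} (hy : 1 ≤ |y|) :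
    indicator (Icc 0 1) f |y| = 0 := by
  rcases hy.eq_or_lt with h | h
  · rw [← h, indicator_of_mem (by simp), hf]
  · exact indicator_of_notMem (fun hmem => h.not_ge hmem.2) f

theorem indicator_Icc_abs_add_indicator_Icc_abs_sub_one (f : ℝ → M) {x : ℝ}
    (hx : x ∈ Icc 0 1) :
    indicator (Icc 0 1) f |x| + indicator (Icc 0 1) f |x - 1| = f x + f (1 - x) := by
  have hx' : 1 - x ∈ Icc (0 : ℝ) 1 := ⟨by linarith [hx.2], by linarith [hx.1]⟩
  rw [abs_of_nonneg hx.1, abs_sub_comm, abs_of_nonneg hx'.1, indicator_of_mem hx,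
    indicator_of_mem hx']

end EvenExtension

theorem tsum_int_sub_eq_of_add_sub_one_eq {M : Type*} [AddCommMonoid M] [TopologicalSpace M]
    {φ : ℝ → M} {c : M} (hpair : ∀ x ∈ Ico (0 : ℝ) 1, φ x + φ (x - 1) = c)
    (hsupp : ∀ y, 1 ≤ |y| → φ y = 0) (x : ℝ) : ∑' n : ℤ, φ (x - n) = c := by
  set m := ⌊x⌋
  have hm : (m : ℝ) ≤ x := Int.floor_le x
  have hm' : x < m + 1 := Int.lt_floor_add_one x
  have hvanish : ∀ n ∉ ({m, m + 1} : Finset ℤ), φ (x - n) = 0 := by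
    intro n hn
    simp only [Finset.mem_insert, Finset.mem_singleton, not_or] at hn
    apply hsupp
    rcases le_or_gt n (m - 1) with h | h
    · have : (n : ℝ) ≤ m - 1 := by exact_mod_cast h
      exact le_abs.mpr (Or.inl (by linarith))
    · have : (m : ℝ) + 2 ≤ n := by exact_mod_cast (by omega : m + 2 ≤ n)
      exact le_abs.mpr (Or.inr (by linarith))
  rw [tsum_eq_sum hvanish, Finset.sum_pair (by omega), Int.cast_add, Int.cast_one, ← sub_sub]
  exact hpair (x - m) ⟨by linarith, by linarith⟩

theorem phi1_partition_of_unity (ω₀ : ℝ) (hω₀ : ω₀ ∈ Set.Ioo 0 π)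
    (s : ℝ) (hs : s = 2 * Real.sin (ω₀ / 2) - ω₀ * Real.cos (ω₀ / 2))
    (g φ₁ : ℝ → ℝ)
    (hg : ∀ x, g x = Set.indicator (Set.Icc (0 : ℝ) 1)
      (fun y => 1 - Real.sin (ω₀ / 2) / s + (ω₀ * Real.cos (ω₀ / 2) / s) * y
        + Real.sin (ω₀ / 2 - ω₀ * y) / s) x)
    (hφ : ∀ x, φ₁ x = if 0 ≤ x then g x else g (-x)) :
    (∀ x ∈ Set.Icc (0 : ℝ) 1, φ₁ x + φ₁ (x - 1) = 1) ∧
    (∀ x : ℝ, ∑' n : ℤ, φ₁ (x - n) = 1) := by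
  have hs0 : s ≠ 0 := hs ▸ (two_mul_sin_half_sub_mul_cos_half_pos hω₀).ne'
  have hφ₁ : ∀ x, φ₁ x = indicator (Icc 0 1) (sinProfile ω₀ s) |x| := fun x =>
    (eq_abs_of_eq_ite hφ x).trans (hg |x|)
  have hpair : ∀ x ∈ Icc (0 : ℝ) 1, φ₁ x + φ₁ (x - 1) = 1 := fun x hx => by
    rw [hφ₁, hφ₁, indicator_Icc_abs_add_indicator_Icc_abs_sub_one _ hx,
      sinProfile_add_sinProfile_one_sub hs hs0]
  have hsupp : ∀ y, 1 ≤ |y| → φ₁ y = 0 := fun y hy => by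
    rw [hφ₁, indicator_Icc_abs_eq_zero (sinProfile_one hs hs0) hy]
  exact ⟨hpair, tsum_int_sub_eq_of_add_sub_one_eq (fun x hx => hpair x (Ico_subset_Icc_self hx))
    hsupp⟩
end

section
/- For x ∈ [0,1], the identity cos(ω₀ x) = cos(0)·φ_{1,ω₀}(x) − ω₀ sin(0)·φ_{2,ω₀}(x) + cos(ω₀)·φ_{1,ω₀}(x−1) − ω₀ sin(ω₀)·φ_{2,ω₀}(x−1) holds; i.e., the Hermite pair (φ_{1,ω₀}, φ_{2,ω₀}) reproduces cos(ω₀ x) on [0,1] from its values and derivatives at 0 and 1. -/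
/-!
With `σ = sin (ω / 2)` and `c = cos (ω / 2)` one has `u = -2 σ s`, and expanding all angles in
`σ`, `c`, `cos (ω x)`, `sin (ω x)` and clearing denominators turns
`cos (ω x) = g₁ x + cos ω g₁ (1 - x) + ω sin ω g₂ (1 - x)` into a polynomial identity modulo
`σ² + c² = 1`, valid for every real `x`. On `[0, 1]` the even extension `φ₁` takes the values
`g₁ x` and `g₁ (1 - x)`, and the odd extension gives `φ₂ (x - 1) = -g₂ (1 - x)`, also at `x = 1`
because `g₂ 0 = 0`.
-/

open Real Set

noncomputable section

def hermiteS (ω : ℝ) : ℝ := 2 * sin (ω / 2) - ω * cos (ω / 2)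
def hermiteT (ω : ℝ) : ℝ := 2 * sin (ω / 2) + ω * cos (ω / 2)
def hermiteU (ω : ℝ) : ℝ := ω * sin ω - 2 * (1 - cos ω)
def hermiteV (ω : ℝ) : ℝ := 2 * sin ω + ω * (1 - cos ω)

def hermiteG₁ (ω x : ℝ) : ℝ :=
  1 - sin (ω / 2) / hermiteS ω + (ω * cos (ω / 2) / hermiteS ω) * x
    + sin (ω / 2 - ω * x) / hermiteS ω

def hermiteG₂ (ω x : ℝ) : ℝ :=
  (sin ω - ω * cos ω) / (ω * hermiteU ω) + (sin (ω / 2) / hermiteS ω) * x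
    - (ω ^ 2 * cos (ω / 2) * cos (ω * (1 - x))
        + sin (ω / 2) * (sin (ω * x) * hermiteU ω - cos (ω * x) * hermiteV ω))
      / (2 * ω * sin (ω / 2) * hermiteS ω * hermiteT ω)

end

lemma sin_eq_two_mul_sin_half_mul_cos_half (x : ℝ) : sin x = 2 * sin (x / 2) * cos (x / 2) := by
  rw [← sin_two_mul, mul_div_cancel₀ x two_ne_zero]

lemma cos_eq_one_sub_two_mul_sin_half_sq (x : ℝ) : cos x = 1 - 2 * sin (x / 2) ^ 2 := by
  rw [← cos_two_mul_eq_one_sub, mul_div_cancel₀ x two_ne_zero]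

lemma hermiteU_eq (ω : ℝ) : hermiteU ω = -2 * sin (ω / 2) * hermiteS ω := by
  rw [hermiteU, hermiteS, sin_eq_two_mul_sin_half_mul_cos_half ω, cos_eq_one_sub_two_mul_sin_half_sq ω]
  ring

lemma ne_zero_of_hermiteS_ne_zero {ω : ℝ} (hs : hermiteS ω ≠ 0) : ω ≠ 0 := by
  rintro rfl; simp [hermiteS] at hs

lemma hermiteG₂_zero {ω : ℝ} (hσ : sin (ω / 2) ≠ 0) (hs : hermiteS ω ≠ 0)
    (ht : hermiteT ω ≠ 0) : hermiteG₂ ω 0 = 0 := by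
  have hω := ne_zero_of_hermiteS_ne_zero hs
  rw [hermiteG₂, hermiteU_eq, hermiteV]
  simp only [hermiteS, hermiteT, mul_zero, sin_zero, cos_zero, sub_zero, mul_one, add_zero,
    sin_eq_two_mul_sin_half_mul_cos_half ω, cos_eq_one_sub_two_mul_sin_half_sq ω] at hs ht ⊢
  field_simp
  linear_combination (-2 * ω * sin (ω / 2)) * sin_sq_add_cos_sq (ω / 2)

lemma cos_mul_eq_hermite {ω : ℝ} (hσ : sin (ω / 2) ≠ 0) (hs : hermiteS ω ≠ 0)
    (ht : hermiteT ω ≠ 0) (x : ℝ) :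
    cos (ω * x) = hermiteG₁ ω x + cos ω * hermiteG₁ ω (1 - x) + ω * sin ω * hermiteG₂ ω (1 - x) := by
  have hω := ne_zero_of_hermiteS_ne_zero hs
  rw [hermiteG₁, hermiteG₁, hermiteG₂, hermiteU_eq, hermiteV, sub_sub_cancel]
  simp only [hermiteS, hermiteT, mul_one_sub ω x, sin_sub, cos_sub,
    sin_eq_two_mul_sin_half_mul_cos_half ω, cos_eq_one_sub_two_mul_sin_half_sq ω] at hs ht ⊢
  field_simp
  set σ := sin (ω / 2)
  set c := cos (ω / 2)
  have hσc : σ ^ 2 + c ^ 2 = 1 := sin_sq_add_cos_sq _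
  linear_combination (2 * cos (ω * x) * c * σ * ω - 8 * cos (ω * x) * σ ^ 4 + 4 * σ ^ 2
    + 2 * c * σ * ω - 8 * sin (ω * x) * c * σ ^ 3) * hσc

lemma indicator_abs_of_mem_Icc {g : ℝ → ℝ} {x : ℝ} (hx : x ∈ Icc (0 : ℝ) 1) :
    (Icc (-1 : ℝ) 1).indicator (fun y => g |y|) x = g x := by
  rw [indicator_of_mem (show x ∈ Icc (-1 : ℝ) 1 from ⟨by linarith [hx.1], hx.2⟩),
    abs_of_nonneg hx.1]

lemma indicator_abs_sub_one {g : ℝ → ℝ} {x : ℝ} (hx : x ∈ Icc (0 : ℝ) 1) :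
    (Icc (-1 : ℝ) 1).indicator (fun y => g |y|) (x - 1) = g (1 - x) := by
  rw [indicator_of_mem (show x - 1 ∈ Icc (-1 : ℝ) 1 from ⟨by linarith [hx.1], by linarith [hx.2]⟩),
    abs_sub_comm,
    abs_of_nonneg (sub_nonneg.2 hx.2)]

lemma indicator_sign_mul_abs_sub_one {g : ℝ → ℝ} (hg : g 0 = 0) {x : ℝ} (hx : x ∈ Icc (0 : ℝ) 1) :
    (Icc (-1 : ℝ) 1).indicator (fun y => sign y * g |y|) (x - 1) = -g (1 - x) := by
  rw [indicator_of_mem (show x - 1 ∈ Icc (-1 : ℝ) 1 from ⟨by linarith [hx.1], by linarith [hx.2]⟩),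
    abs_sub_comm,
    abs_of_nonneg (sub_nonneg.2 hx.2)]
  rcases hx.2.lt_or_eq with hx1 | rfl
  · rw [sign_of_neg (by linarith), neg_one_mul]
  · simp [hg]

theorem hermite_reproduces_cos_general (ω₀ : ℝ)
    (s t u v : ℝ)
    (hs : s = 2 * Real.sin (ω₀ / 2) - ω₀ * Real.cos (ω₀ / 2))
    (ht : t = 2 * Real.sin (ω₀ / 2) + ω₀ * Real.cos (ω₀ / 2))
    (hu : u = ω₀ * Real.sin ω₀ - 2 * (1 - Real.cos ω₀))
    (hv : v = 2 * Real.sin ω₀ + ω₀ * (1 - Real.cos ω₀))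
    (ht0 : t ≠ 0) (hu0 : u ≠ 0)
    (g₁ g₂ φ₁ φ₂ : ℝ → ℝ)
    (hg₁ : ∀ x, g₁ x = 1 - Real.sin (ω₀ / 2) / s + (ω₀ * Real.cos (ω₀ / 2) / s) * x
        + Real.sin (ω₀ / 2 - ω₀ * x) / s)
    (hg₂ : ∀ x, g₂ x = (Real.sin ω₀ - ω₀ * Real.cos ω₀) / (ω₀ * u)
        + (Real.sin (ω₀ / 2) / s) * x
        - (ω₀ ^ 2 * Real.cos (ω₀ / 2) * Real.cos (ω₀ * (1 - x))
            + Real.sin (ω₀ / 2) * (Real.sin (ω₀ * x) * u - Real.cos (ω₀ * x) * v))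
          / (2 * ω₀ * Real.sin (ω₀ / 2) * s * t))
    (hφ₁ : ∀ x, φ₁ x = Set.indicator (Set.Icc (-1 : ℝ) 1) (fun y => g₁ |y|) x)
    (hφ₂ : ∀ x, φ₂ x = Set.indicator (Set.Icc (-1 : ℝ) 1)
        (fun y => Real.sign y * g₂ |y|) x) :
    ∀ x ∈ Set.Icc (0 : ℝ) 1,
      Real.cos (ω₀ * x) =
        Real.cos 0 * φ₁ x - ω₀ * Real.sin 0 * φ₂ x
        + Real.cos ω₀ * φ₁ (x - 1) - ω₀ * Real.sin ω₀ * φ₂ (x - 1) := by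
  intro x hx
  subst hs ht hu hv
  obtain rfl : g₁ = hermiteG₁ ω₀ := funext hg₁
  obtain rfl : g₂ = hermiteG₂ ω₀ := funext hg₂
  have hu : hermiteU ω₀ ≠ 0 := hu0
  rw [hermiteU_eq, mul_ne_zero_iff, mul_ne_zero_iff] at hu
  obtain ⟨⟨-, hσ⟩, hs⟩ := hu
  rw [hφ₁ x, hφ₁ (x - 1), hφ₂ (x - 1), indicator_abs_of_mem_Icc hx, indicator_abs_sub_one hx,
    indicator_sign_mul_abs_sub_one (hermiteG₂_zero hσ hs ht0) hx, cos_mul_eq_hermite hσ hs ht0 x,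
    cos_zero, sin_zero]
  ring

theorem hermite_reproduces_cos (ω₀ : ℝ) (hω₀ : ω₀ ∈ Set.Ioo 0 π)
    (s t u v : ℝ)
    (hs : s = 2 * Real.sin (ω₀ / 2) - ω₀ * Real.cos (ω₀ / 2))
    (ht : t = 2 * Real.sin (ω₀ / 2) + ω₀ * Real.cos (ω₀ / 2))
    (hu : u = ω₀ * Real.sin ω₀ - 2 * (1 - Real.cos ω₀))
    (hv : v = 2 * Real.sin ω₀ + ω₀ * (1 - Real.cos ω₀))
    (hs0 : s ≠ 0) (ht0 : t ≠ 0) (hu0 : u ≠ 0)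
    (g₁ g₂ φ₁ φ₂ : ℝ → ℝ)
    (hg₁ : ∀ x, g₁ x = 1 - Real.sin (ω₀ / 2) / s + (ω₀ * Real.cos (ω₀ / 2) / s) * x
        + Real.sin (ω₀ / 2 - ω₀ * x) / s)
    (hg₂ : ∀ x, g₂ x = (Real.sin ω₀ - ω₀ * Real.cos ω₀) / (ω₀ * u)
        + (Real.sin (ω₀ / 2) / s) * x
        - (ω₀ ^ 2 * Real.cos (ω₀ / 2) * Real.cos (ω₀ * (1 - x))
            + Real.sin (ω₀ / 2) * (Real.sin (ω₀ * x) * u - Real.cos (ω₀ * x) * v))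
          / (2 * ω₀ * Real.sin (ω₀ / 2) * s * t))
    (hφ₁ : ∀ x, φ₁ x = Set.indicator (Set.Icc (-1 : ℝ) 1) (fun y => g₁ |y|) x)
    (hφ₂ : ∀ x, φ₂ x = Set.indicator (Set.Icc (-1 : ℝ) 1)
        (fun y => Real.sign y * g₂ |y|) x) :
    ∀ x ∈ Set.Icc (0 : ℝ) 1,
      Real.cos (ω₀ * x) =
        Real.cos 0 * φ₁ x - ω₀ * Real.sin 0 * φ₂ x
        + Real.cos ω₀ * φ₁ (x - 1) - ω₀ * Real.sin ω₀ * φ₂ (x - 1) :=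
  hermite_reproduces_cos_general ω₀ s t u v hs ht hu hv ht0 hu0 g₁ g₂ φ₁ φ₂ hg₁ hg₂ hφ₁ hφ₂
end

section
/- The four exponential Bernstein basis functions b_{0,ω₀}, b_{1,ω₀}, b_{2,ω₀}, b_{3,ω₀} sum to 1 at every x ∈ [0,1] (partition of unity). -/
/-! By sum-to-product, `sin (ω(1-x)) + sin (ωx)` and `cos (ω(1-x)) + cos (ωx)` are
`2 sin (ω/2) cos (ω(1/2-x))` and `2 cos (ω/2) cos (ω(1/2-x))`, so the combination
`cos (ω/2) · Σ sin - sin (ω/2) · Σ cos` in which they enter the sum of the four basis functions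
vanishes. What remains is a constant, which equals `1` after clearing denominators, by
`sin ω = 2 sin (ω/2) cos (ω/2)` and `sin² + cos² = 1`. -/

open Real

theorem cos_half_add_mul_sin_add_sin (a b : ℝ) :
    cos ((a + b) / 2) * (sin a + sin b) = sin ((a + b) / 2) * (cos a + cos b) := by
  rw [sin_add_sin, cos_add_cos]
  ring

theorem div_sub_sin_add_two_sin_half_div_sub_eq_one {ω : ℝ}
    (hs : 2 * sin (ω / 2) - ω * cos (ω / 2) ≠ 0) (hc : ω - sin ω ≠ 0) :
    ω / (ω - sin ω) + 2 * sin (ω / 2) / (2 * sin (ω / 2) - ω * cos (ω / 2))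
      - 2 * ω * sin (ω / 2) ^ 3 / ((2 * sin (ω / 2) - ω * cos (ω / 2)) * (ω - sin ω)) = 1 := by
  have hsin : sin ω = 2 * sin (ω / 2) * cos (ω / 2) := by
    rw [← sin_two_mul]; ring_nf
  rw [hsin] at hc ⊢
  field_simp
  linear_combination (-2 * ω * sin (ω / 2)) * sin_sq_add_cos_sq (ω / 2)

theorem bernstein_partition_of_unity_general (ω₀ : ℝ)
    (s : ℝ) (hs : s = 2 * Real.sin (ω₀ / 2) - ω₀ * Real.cos (ω₀ / 2))
    (hs0 : s ≠ 0) (hws : ω₀ - Real.sin ω₀ ≠ 0)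
    (b₀ b₁ b₂ b₃ : ℝ → ℝ)
    (hb₀ : ∀ x, b₀ x = (ω₀ * (1 - x) - Real.sin (ω₀ * (1 - x))) / (ω₀ - Real.sin ω₀))
    (hb₃ : ∀ x, b₃ x = (ω₀ * x - Real.sin (ω₀ * x)) / (ω₀ - Real.sin ω₀))
    (hb₂ : ∀ x, b₂ x = Real.sin (ω₀ / 2) / s
        - (2 * ω₀ * Real.sin (ω₀ / 2) ^ 3) / (s * (ω₀ - Real.sin ω₀)) * x
        + (1 / (ω₀ - Real.sin ω₀) + Real.cos (ω₀ / 2) / s) * Real.sin (ω₀ * x)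
        - (Real.sin (ω₀ / 2) / s) * Real.cos (ω₀ * x))
    (hb₁ : ∀ x, b₁ x = b₂ (1 - x)) :
    ∀ x ∈ Set.Icc (0 : ℝ) 1, b₀ x + b₁ x + b₂ x + b₃ x = 1 := by
  intro x _
  have hmid : (ω₀ * (1 - x) + ω₀ * x) / 2 = ω₀ / 2 := by ring
  have hcancel := cos_half_add_mul_sin_add_sin (ω₀ * (1 - x)) (ω₀ * x)
  rw [hmid] at hcancel
  have hconst := div_sub_sin_add_two_sin_half_div_sub_eq_one (hs ▸ hs0) hws
  rw [← hs] at hconst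
  rw [hb₀, hb₁, hb₂, hb₂, hb₃]
  linear_combination hconst + hcancel / s

theorem bernstein_partition_of_unity (ω₀ : ℝ) (hω₀ : ω₀ ∈ Set.Ioo 0 π)
    (s : ℝ) (hs : s = 2 * Real.sin (ω₀ / 2) - ω₀ * Real.cos (ω₀ / 2))
    (hs0 : s ≠ 0) (hws : ω₀ - Real.sin ω₀ ≠ 0)
    (b₀ b₁ b₂ b₃ : ℝ → ℝ)
    (hb₀ : ∀ x, b₀ x = (ω₀ * (1 - x) - Real.sin (ω₀ * (1 - x))) / (ω₀ - Real.sin ω₀))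
    (hb₃ : ∀ x, b₃ x = (ω₀ * x - Real.sin (ω₀ * x)) / (ω₀ - Real.sin ω₀))
    (hb₂ : ∀ x, b₂ x = Real.sin (ω₀ / 2) / s
        - (2 * ω₀ * Real.sin (ω₀ / 2) ^ 3) / (s * (ω₀ - Real.sin ω₀)) * x
        + (1 / (ω₀ - Real.sin ω₀) + Real.cos (ω₀ / 2) / s) * Real.sin (ω₀ * x)
        - (Real.sin (ω₀ / 2) / s) * Real.cos (ω₀ * x))
    (hb₁ : ∀ x, b₁ x = b₂ (1 - x)) :
    ∀ x ∈ Set.Icc (0 : ℝ) 1, b₀ x + b₁ x + b₂ x + b₃ x = 1 :=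
  bernstein_partition_of_unity_general ω₀ s hs hs0 hws b₀ b₁ b₂ b₃ hb₀ hb₃ hb₂ hb₁
end
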